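/- Let $\Omega \subset [0,1]^d$ be such that $\partial\Omega$ admits a finite $(d-1)$-dimensional Minkowski content $\mathcal{M}(\partial\Omega) = \lim_{\epsilon \downarrow 0} \lambda_d((\partial\Omega)_\epsilon)/(2\epsilon)$. Suppose $[0,1]^d$ is partitioned into $n$ measurable cells $E_1,\dots,E_n$ each of Lebesgue measure $1/n$ and diameter at most $2\sqrt{d+3}\,n^{-1/d}$. Let $\mathcal{T}_{\mathrm{bdy}}$ be the set of indices $i$ such that $E_i \cap \Omega \ne \emptyset$ but $E_i \not\subset \Omega$. Then there exists a constant $K$ (depending on $d$ and $\mathcal{M}(\partial\Omega)$) such that $|\mathcal{T}_{\mathrm{bdy}}| \le K n^{1-1/d}$ for all sufficiently large $n$. -/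

import Mathlib

/-!
A cell of diameter at most `ε` that meets both `Ω` and its complement lies in the closed
`ε`-neighbourhood of `∂Ω`: the closed ball of radius `ε` around any of its points is connected and
contains points of `Ω` and of `Ωᶜ`, hence meets `∂Ω`. Since the `n` cells of volume `1/n` cover a
set of volume `1`, the boundary cells alone cover volume at least `|𝒯_bdy| / n`, so
`|𝒯_bdy| / n ≤ λ((∂Ω)_ε)`. With `ε = 2 √(d+3) n^(-1/d) → 0`, the Minkowski content gives
`λ((∂Ω)_ε) ≤ 2 (𝓜(∂Ω) + 1) ε` for large `n`, so `|𝒯_bdy| ≤ 4 √(d+3) (𝓜(∂Ω) + 1) n^(1-1/d)`.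
-/

open MeasureTheory ProbabilityTheory Filter Topology
open scoped NNReal ENNReal

/-- The unit cube `[0,1]^d` in Euclidean space. -/
def unitCube (d : ℕ) : Set (EuclideanSpace ℝ (Fin d)) :=
  WithLp.ofLp ⁻¹' Set.univ.pi fun _ => Set.Icc (0 : ℝ) 1

lemma isCompact_unitCube (d : ℕ) : IsCompact (unitCube d) :=
  (PiLp.homeomorph 2 (fun _ : Fin d => ℝ)).isCompact_preimage.mpr
    (isCompact_univ_pi fun _ => isCompact_Icc)

lemma volume_unitCube (d : ℕ) : volume (unitCube d) = 1 := by
  have h := (EuclideanSpace.volume_preserving_symm_measurableEquiv_toLp (Fin d)).measure_preimage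
    (s := Set.univ.pi fun _ : Fin d => Set.Icc (0 : ℝ) 1)
    (MeasurableSet.univ_pi fun _ => measurableSet_Icc).nullMeasurableSet
  rw [show (MeasurableEquiv.toLp 2 (Fin d → ℝ)).symm ⁻¹'
      (Set.univ.pi fun _ : Fin d => Set.Icc (0 : ℝ) 1) = unitCube d from rfl] at h
  rw [h, volume_pi_pi]
  simp [Real.volume_Icc]

lemma IsPreconnected.inter_frontier_nonempty {X : Type*} [TopologicalSpace X] {s t : Set X}
    (hs : IsPreconnected s) (hst : (s ∩ t).Nonempty) (hts : (s \ t).Nonempty) :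
    (s ∩ frontier t).Nonempty := by
  by_contra h
  have hcover : s ⊆ interior t ∪ interior tᶜ := by
    intro x hx
    by_cases hxt : x ∈ interior t
    · exact Or.inl hxt
    · rw [interior_compl]
      exact Or.inr fun hcl => h ⟨x, hx, hcl, hxt⟩
  rcases hs.subset_or_subset isOpen_interior isOpen_interior
      (disjoint_compl_right.mono interior_subset interior_subset) hcover with hin | hout
  · obtain ⟨x, hxs, hxt⟩ := hts
    exact hxt (interior_subset (hin hxs))
  · obtain ⟨x, hxs, hxt⟩ := hst
    exact interior_subset (hout hxs) hxt

lemma subset_cthickening_frontier_of_diam_le {X : Type*} [NormedAddCommGroup X]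
    [NormedSpace ℝ X] {s t : Set X} {ε : ℝ} (hs : Bornology.IsBounded s)
    (hdiam : Metric.diam s ≤ ε) (hst : (s ∩ t).Nonempty) (hts : ¬ s ⊆ t) :
    s ⊆ Metric.cthickening ε (frontier t) := by
  obtain ⟨a, has, hat⟩ := hst
  obtain ⟨b, hbs, hbt⟩ := Set.not_subset.mp hts
  intro x hx
  have hball : ∀ y ∈ s, y ∈ Metric.closedBall x ε := fun y hy =>
    Metric.mem_closedBall'.mpr ((Metric.dist_le_diam_of_mem hs hx hy).trans hdiam)
  obtain ⟨z, hzx, hzt⟩ := (convex_closedBall x ε).isPreconnected.inter_frontier_nonempty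
    ⟨a, hball a has, hat⟩ ⟨b, hball b hbs, hbt⟩
  exact Metric.mem_cthickening_of_dist_le x z ε _ hzt (Metric.mem_closedBall'.mp hzx)

def boundaryCells {ι X : Type*} (s : ι → Set X) (t : Set X) : Set ι :=
  {i | (s i ∩ t).Nonempty ∧ ¬ s i ⊆ t}

lemma card_mul_le_measure_biUnion {X ι : Type*} [MeasurableSpace X] [Fintype ι]
    [DecidableEq ι] {μ : Measure X} {s : ι → Set X} {c : ℝ≥0∞} (hc : c ≠ ∞)
    (hμ : ∀ i, μ (s i) ≤ c) (htotal : Fintype.card ι * c ≤ μ (⋃ i, s i)) (S : Finset ι) :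
    S.card * c ≤ μ (⋃ i ∈ S, s i) := by
  have hrest : μ (⋃ i ∈ Sᶜ, s i) ≤ Sᶜ.card * c :=
    (measure_biUnion_finset_le _ _).trans (by simpa using Finset.sum_le_sum fun i _ => hμ i)
  have hsplit : (⋃ i, s i) ⊆ (⋃ i ∈ S, s i) ∪ ⋃ i ∈ Sᶜ, s i := Set.iUnion_subset fun i =>
    if hi : i ∈ S then (Set.subset_biUnion_of_mem (u := s) hi).trans Set.subset_union_left
    else (Set.subset_biUnion_of_mem (u := s) (Finset.mem_compl.mpr hi)).trans
      Set.subset_union_right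
  refine (ENNReal.add_le_add_iff_right
    (ENNReal.mul_ne_top (ENNReal.natCast_ne_top Sᶜ.card) hc)).mp ?_
  calc S.card * c + Sᶜ.card * c = Fintype.card ι * c := by
        rw [← add_mul, ← Nat.cast_add, Finset.card_add_card_compl]
    _ ≤ μ (⋃ i, s i) := htotal
    _ ≤ μ (⋃ i ∈ S, s i) + μ (⋃ i ∈ Sᶜ, s i) := (measure_mono hsplit).trans (measure_union_le _ _)
    _ ≤ μ (⋃ i ∈ S, s i) + Sᶜ.card * c := by gcongr

lemma ncard_boundaryCells_mul_le_measure_cthickening {X ι : Type*} [NormedAddCommGroup X]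
    [NormedSpace ℝ X] [MeasurableSpace X] [Fintype ι] {μ : Measure X} {s : ι → Set X}
    {t : Set X} {c : ℝ≥0∞} {ε : ℝ} (hc : c ≠ ∞) (hμ : ∀ i, μ (s i) ≤ c)
    (htotal : Fintype.card ι * c ≤ μ (⋃ i, s i)) (hs : ∀ i, Bornology.IsBounded (s i))
    (hdiam : ∀ i, Metric.diam (s i) ≤ ε) :
    (boundaryCells s t).ncard * c ≤ μ (Metric.cthickening ε (frontier t)) := by
  classical
  rw [Set.ncard_eq_toFinset_card']
  refine (card_mul_le_measure_biUnion hc hμ htotal _).trans (measure_mono ?_)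
  refine Set.iUnion₂_subset fun i hi => ?_
  rw [Set.mem_toFinset] at hi
  exact subset_cthickening_frontier_of_diam_le (hs i) (hdiam i) hi.1 hi.2

lemma tendsto_const_mul_natCast_rpow_nhdsGT_zero {C p : ℝ} (hC : 0 < C) (hp : p < 0) :
    Tendsto (fun n : ℕ => C * (n : ℝ) ^ p) atTop (𝓝[>] 0) := by
  refine tendsto_nhdsWithin_of_tendsto_nhds_of_eventually_within _ ?_ ?_
  · simpa [neg_neg] using
      ((tendsto_rpow_neg_atTop (neg_pos.mpr hp)).comp tendsto_natCast_atTop_atTop).const_mul C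
  · filter_upwards [eventually_gt_atTop 0] with n hn
    exact mul_pos hC (Real.rpow_pos_of_pos (Nat.cast_pos.mpr hn) p)

lemma natCast_mul_ofReal_one_div {n : ℕ} (hn : 1 ≤ n) :
    (n : ℝ≥0∞) * ENNReal.ofReal (1 / n) = 1 := by
  have hn0 : (0 : ℝ) < n := by exact_mod_cast hn
  rw [one_div, ENNReal.ofReal_inv_of_pos hn0, ENNReal.ofReal_natCast]
  exact ENNReal.mul_inv_cancel (by exact_mod_cast (by omega : n ≠ 0)) (ENNReal.natCast_ne_top n)

theorem boundary_cell_count_general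
    (d : ℕ) (hd : 1 ≤ d) (Ω : Set (EuclideanSpace ℝ (Fin d))) (hΩ : Ω ⊆ unitCube d)
    -- `∂Ω` admits a finite `(d-1)`-dimensional Minkowski content `Mink`:
    (Mink : ℝ)
    (hMink : Tendsto (fun ε : ℝ =>
        (volume (Metric.cthickening ε (frontier Ω))).toReal / (2 * ε))
      (𝓝[>] 0) (𝓝 Mink))
    -- a family of partitions of the unit cube into `n` cells:
    (E : (n : ℕ) → Fin n → Set (EuclideanSpace ℝ (Fin d)))
    (hcover : ∀ n, 1 ≤ n → (⋃ i : Fin n, E n i) = unitCube d)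
    (hvol : ∀ n (i : Fin n), volume (E n i) = ENNReal.ofReal (1 / n))
    (hdiam : ∀ n (i : Fin n), 1 ≤ n →
      Metric.diam (E n i) ≤ 2 * Real.sqrt (d + 3) * (n : ℝ) ^ (-(1 : ℝ) / d)) :
    ∃ K : ℝ, ∀ᶠ n : ℕ in atTop,
      ((Set.ncard {i : Fin n | (E n i ∩ Ω).Nonempty ∧ ¬ E n i ⊆ Ω} : ℝ))
        ≤ K * (n : ℝ) ^ (1 - 1 / (d : ℝ)) := by
  set ε : ℕ → ℝ := fun n => 2 * Real.sqrt (d + 3) * (n : ℝ) ^ (-(1 : ℝ) / d)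
  have hd0 : (0 : ℝ) < d := by exact_mod_cast hd
  have hε : Tendsto ε atTop (𝓝[>] 0) := tendsto_const_mul_natCast_rpow_nhdsGT_zero
    (by positivity) (div_neg_of_neg_of_pos (by norm_num) hd0)
  have hMink_le : ∀ᶠ n in atTop,
      (volume (Metric.cthickening (ε n) (frontier Ω))).toReal / (2 * ε n) ≤ Mink + 1 :=
    (hMink.comp hε).eventually (eventually_le_nhds (lt_add_one Mink))
  have hfrontier : Bornology.IsBounded (frontier Ω) := (isCompact_unitCube d).isBounded.subset
    ((frontier_subset_closure).trans (closure_minimal hΩ (isCompact_unitCube d).isClosed))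
  refine ⟨4 * Real.sqrt (d + 3) * (Mink + 1), ?_⟩
  filter_upwards [hMink_le, eventually_ge_atTop 1] with n hn_le hn
  have hn0 : (0 : ℝ) < n := by exact_mod_cast hn
  have hcount := ncard_boundaryCells_mul_le_measure_cthickening (t := Ω) ENNReal.ofReal_ne_top
    (fun i => (hvol n i).le)
    (by rw [Fintype.card_fin, natCast_mul_ofReal_one_div hn, hcover n hn, volume_unitCube])
    (fun i => (isCompact_unitCube d).isBounded.subset (hcover n hn ▸ Set.subset_iUnion _ i))
    (fun i => hdiam n i hn)
  have hcountR : ((boundaryCells (E n) Ω).ncard : ℝ) / n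
      ≤ (volume (Metric.cthickening (ε n) (frontier Ω))).toReal := by
    have h := ENNReal.toReal_mono hfrontier.cthickening.measure_lt_top.ne hcount
    rwa [ENNReal.toReal_mul, ENNReal.toReal_ofReal (by positivity), ENNReal.toReal_natCast,
      mul_one_div] at h
  have hvolR := (div_le_iff₀ (by positivity)).mp hn_le
  calc ((boundaryCells (E n) Ω).ncard : ℝ)
      ≤ n * ((Mink + 1) * (2 * ε n)) := by
        rw [← div_le_iff₀' hn0]; exact hcountR.trans hvolR
    _ = 4 * Real.sqrt (d + 3) * (Mink + 1) * (n * (n : ℝ) ^ (-(1 : ℝ) / d)) := by ring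
    _ = 4 * Real.sqrt (d + 3) * (Mink + 1) * (n : ℝ) ^ (1 - 1 / (d : ℝ)) := by
        rw [sub_eq_add_neg, Real.rpow_add hn0, Real.rpow_one, neg_div]

theorem boundary_cell_count
    (d : ℕ) (hd : 1 ≤ d) (Ω : Set (EuclideanSpace ℝ (Fin d))) (hΩ : Ω ⊆ unitCube d)
    -- `∂Ω` admits a finite `(d-1)`-dimensional Minkowski content `Mink`:
    (Mink : ℝ)
    (hMink : Tendsto (fun ε : ℝ =>
        (volume (Metric.cthickening ε (frontier Ω))).toReal / (2 * ε))
      (𝓝[>] 0) (𝓝 Mink))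
    -- a family of partitions of the unit cube into `n` cells:
    (E : (n : ℕ) → Fin n → Set (EuclideanSpace ℝ (Fin d)))
    (hcover : ∀ n, 1 ≤ n → (⋃ i : Fin n, E n i) = unitCube d)
    (hdisj : ∀ n, 1 ≤ n → Pairwise (Function.onFun Disjoint (E n)))
    (hvol : ∀ n (i : Fin n), volume (E n i) = ENNReal.ofReal (1 / n))
    (hdiam : ∀ n (i : Fin n), 1 ≤ n →
      Metric.diam (E n i) ≤ 2 * Real.sqrt (d + 3) * (n : ℝ) ^ (-(1 : ℝ) / d)) :
    ∃ K : ℝ, ∀ᶠ n : ℕ in atTop,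
      ((Set.ncard {i : Fin n | (E n i ∩ Ω).Nonempty ∧ ¬ E n i ⊆ Ω} : ℝ))
        ≤ K * (n : ℝ) ^ (1 - 1 / (d : ℝ)) :=
  boundary_cell_count_general d hd Ω hΩ Mink hMink E hcover hvol hdiam
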